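/- Let {D_I}_{I∈({1,...,n} choose 2)} be a family of positive real numbers that is bigraphlike on subsets X,Y ⊂ [n]. Then the family is co-bigraphlike on X and Y (i.e., realized by a pruned positive-weighted complete bipartite graph on X and Y) if and only if D_{i,j} is indecomposable for all i ∈ X and j ∈ Y. -/

import Mathlib

open SimpleGraph

variable {V : Type*}

/-- weight of a walk: sum of the weights of its edges -/
noncomputable def walkWeight (G : SimpleGraph V) (w : Sym2 V → ℝ) {i j : V} (p : G.Walk i j) : ℝ :=
  (p.edges.map w).sum

/-- the 2-weight: min over paths joining i and j -/
noncomputable def wdist (G : SimpleGraph V) (w : Sym2 V → ℝ) (i j : V) : ℝ :=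
  sInf {x : ℝ | ∃ p : G.Walk i j, p.IsPath ∧ walkWeight G w p = x}

def Realizes (G : SimpleGraph V) (w : Sym2 V → ℝ) {i j : V} (p : G.Walk i j) : Prop :=
  p.IsPath ∧ walkWeight G w p = wdist G w i j

def UsefulEdge (G : SimpleGraph V) (w : Sym2 V → ℝ) (e : Sym2 V) : Prop :=
  ∃ a b : V, a ≠ b ∧ ∀ p : G.Walk a b, Realizes G w p → e ∈ p.edges

def Pruned (G : SimpleGraph V) (w : Sym2 V → ℝ) : Prop :=
  ∀ e ∈ G.edgeSet, UsefulEdge G w e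

def PosWeights (G : SimpleGraph V) (w : Sym2 V → ℝ) : Prop :=
  ∀ e ∈ G.edgeSet, 0 < w e

def Indec (G : SimpleGraph V) (w : Sym2 V → ℝ) (i j : V) : Prop :=
  ∀ z : V, z ≠ i → z ≠ j → wdist G w i j < wdist G w i z + wdist G w z j

def IsLeaf (G : SimpleGraph V) (v : V) : Prop := (G.neighborSet v).ncard = 1

def IsSnake (G : SimpleGraph V) : Prop :=
  G.IsTree ∧ {v : V | IsLeaf G v}.ncard = 2

def IsCaterpillar (G : SimpleGraph V) : Prop :=
  G.IsTree ∧ ∃ (x₁ x₂ : V) (p : G.Walk x₁ x₂), p.IsPath ∧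
    {v : V | v ∈ p.support} = {v : V | 2 ≤ (G.neighborSet v).ncard}

def IsPolygon {n : ℕ} [NeZero n] (G : SimpleGraph (Fin n)) : Prop :=
  ∃ σ : Equiv.Perm (Fin n), G.edgeSet = Set.range (fun i : Fin n => s(σ i, σ (i + 1)))

noncomputable def tmin (G : SimpleGraph V) (w : Sym2 V → ℝ) (x : V) : ℝ :=
  (1 / 2) * sInf {r : ℝ | ∃ y z : V, y ≠ x ∧ z ≠ x ∧ y ≠ z ∧
    r = wdist G w x y + wdist G w x z - wdist G w y z}

def IsBipartiteOn (G : SimpleGraph V) (X Y : Set V) : Prop :=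
  X ∩ Y = ∅ ∧ X ∪ Y = Set.univ ∧ ∀ a b : V, G.Adj a b → (a ∈ X ∧ b ∈ Y) ∨ (a ∈ Y ∧ b ∈ X)

noncomputable def chainSum {α : Type*} (D : α → α → ℝ) : List α → ℝ
  | [] => 0
  | [_] => 0
  | a :: b :: l => D a b + chainSum D (b :: l)

def FIndec {n : ℕ} (D : Fin n → Fin n → ℝ) (i j : Fin n) : Prop :=
  ∀ z : Fin n, z ≠ i → z ≠ j → D i j < D i z + D z j

def TriangleIneq {n : ℕ} (D : Fin n → Fin n → ℝ) : Prop :=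
  ∀ i j k : Fin n, i ≠ j → j ≠ k → i ≠ k → D i j ≤ D i k + D k j

def MaxTwice (x y z : ℝ) : Prop :=
  (x = y ∧ z ≤ x) ∨ (x = z ∧ y ≤ x) ∨ (y = z ∧ x ≤ y)

def FourPoint {n : ℕ} (D : Fin n → Fin n → ℝ) : Prop :=
  ∀ i j k h : Fin n, i ≠ j → i ≠ k → i ≠ h → j ≠ k → j ≠ h → k ≠ h →
    MaxTwice (D i j + D k h) (D i k + D j h) (D i h + D k j)

def MedianFamily {n : ℕ} (D : Fin n → Fin n → ℝ) : Prop :=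
  ∀ a b c : Fin n, ∃! m : Fin n,
    ∀ i ∈ ({a, b, c} : Set (Fin n)), ∀ j ∈ ({a, b, c} : Set (Fin n)), i ≠ j →
      D i j = D i m + D j m

noncomputable def tminF {n : ℕ} (D : Fin n → Fin n → ℝ) (x : Fin n) : ℝ :=
  (1 / 2) * sInf {r : ℝ | ∃ y z : Fin n, y ≠ x ∧ z ≠ x ∧ y ≠ z ∧ r = D x y + D x z - D y z}

def interiorSet {G : SimpleGraph V} {u v : V} (p : G.Walk u v) : Set V :=
  {x : V | x ∈ p.support ∧ x ≠ u ∧ x ≠ v}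

/-!
An edge `s(i, j)` of a finite connected positive-weighted graph is useful exactly when its
2-weight is indecomposable. If `D i j = D i z + D z j`, minimal `i`–`z` and `z`–`j` walks join to
an `i`–`j` walk that avoids the edge and is no heavier than it, so it can replace the edge in any
minimal path. Conversely, if `D i j` is indecomposable, a minimal `i`–`j` path whose first step
goes elsewhere would be strictly too heavy, so the edge itself is the only minimal path.

This gives the forward direction. For the converse, weight the complete bipartite graph on `X`
and `Y` by the 2-weights of a bipartite graph realizing `D`: it contains that graph, and the
triangle inequality for 2-weights bounds each of its walks from below, so its 2-weights are
again `D`. All its edges join `X` to `Y`, hence are indecomposable, hence useful.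
-/

section WalkWeight

variable {G H : SimpleGraph V} {w : Sym2 V → ℝ}

@[simp]
lemma walkWeight_nil {u : V} : walkWeight G w (Walk.nil : G.Walk u u) = 0 := by
  simp [walkWeight]

@[simp]
lemma walkWeight_cons {u v x : V} (h : G.Adj u v) (p : G.Walk v x) :
    walkWeight G w (Walk.cons h p) = w s(u, v) + walkWeight G w p := by
  simp [walkWeight]

@[simp]
lemma walkWeight_append {u v x : V} (p : G.Walk u v) (q : G.Walk v x) :
    walkWeight G w (p.append q) = walkWeight G w p + walkWeight G w q := by
  simp [walkWeight]

@[simp]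
lemma walkWeight_reverse {u v : V} (p : G.Walk u v) :
    walkWeight G w p.reverse = walkWeight G w p := by
  simp [walkWeight, List.sum_reverse]

@[simp]
lemma walkWeight_mapLe (hGH : G ≤ H) {u v : V} (p : G.Walk u v) :
    walkWeight H w (p.mapLe hGH) = walkWeight G w p := by
  simp [walkWeight, Walk.mapLe, Walk.edges_map]

lemma PosWeights.nonneg_of_mem_map_edges (hw : PosWeights G w) {u v : V} (p : G.Walk u v) :
    ∀ x ∈ p.edges.map w, 0 ≤ x := by
  intro x hx
  obtain ⟨e, he, rfl⟩ := List.mem_map.mp hx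
  exact (hw e (p.edges_subset_edgeSet he)).le

lemma walkWeight_nonneg (hw : PosWeights G w) {u v : V} (p : G.Walk u v) :
    0 ≤ walkWeight G w p :=
  List.sum_nonneg (hw.nonneg_of_mem_map_edges p)

lemma walkWeight_bypass_le [DecidableEq V] (hw : PosWeights G w) {u v : V} (p : G.Walk u v) :
    walkWeight G w p.bypass ≤ walkWeight G w p :=
  (p.edges_bypass_sublist_edges.map w).sum_le_sum (hw.nonneg_of_mem_map_edges p)

end WalkWeight

section Wdist

variable {G : SimpleGraph V} {w : Sym2 V → ℝ}

lemma wdist_le_walkWeight_of_isPath (hw : PosWeights G w) {u v : V} {p : G.Walk u v}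
    (hp : p.IsPath) : wdist G w u v ≤ walkWeight G w p :=
  csInf_le ⟨0, by rintro _ ⟨q, -, rfl⟩; exact walkWeight_nonneg hw q⟩ ⟨p, hp, rfl⟩

lemma wdist_le_walkWeight (hw : PosWeights G w) {u v : V} (p : G.Walk u v) :
    wdist G w u v ≤ walkWeight G w p := by
  classical
  exact (wdist_le_walkWeight_of_isPath hw p.bypass_isPath).trans (walkWeight_bypass_le hw p)

lemma wdist_le_weight (hw : PosWeights G w) {u v : V} (h : G.Adj u v) :
    wdist G w u v ≤ w s(u, v) := by
  simpa using wdist_le_walkWeight hw (Walk.cons h Walk.nil)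

@[simp]
lemma wdist_self (u : V) : wdist G w u u = 0 := by
  have : {x | ∃ p : G.Walk u u, p.IsPath ∧ walkWeight G w p = x} = {0} := by
    ext x
    constructor
    · rintro ⟨p, hp, rfl⟩
      simp [(Walk.isPath_iff_nil.mp hp).eq_nil]
    · rintro rfl
      exact ⟨Walk.nil, Walk.IsPath.nil, walkWeight_nil⟩
  rw [wdist, this, csInf_singleton]

lemma wdist_comm (u v : V) : wdist G w u v = wdist G w v u := by
  have key : ∀ a b : V, {x | ∃ p : G.Walk a b, p.IsPath ∧ walkWeight G w p = x} ⊆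
      {x | ∃ p : G.Walk b a, p.IsPath ∧ walkWeight G w p = x} := by
    rintro a b _ ⟨p, hp, rfl⟩
    exact ⟨p.reverse, hp.reverse, walkWeight_reverse p⟩
  rw [wdist, wdist, (key u v).antisymm (key v u)]

lemma exists_realizes [Finite V] (hc : G.Connected) (u v : V) :
    ∃ p : G.Walk u v, Realizes G w p := by
  classical
  have := Fintype.ofFinite V
  have hfin : Set.Finite {x | ∃ p : G.Walk u v, p.IsPath ∧ walkWeight G w p = x} := by
    refine Set.Finite.subset
      (Set.finite_range fun p : G.Path u v => walkWeight G w (p : G.Walk u v)) ?_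
    rintro _ ⟨p, hp, rfl⟩
    exact ⟨⟨p, hp⟩, rfl⟩
  obtain ⟨p, hp⟩ := hc.exists_isPath u v
  have hne : Set.Nonempty {x | ∃ p : G.Walk u v, p.IsPath ∧ walkWeight G w p = x} :=
    ⟨_, p, hp, rfl⟩
  obtain ⟨q, hq, hqw⟩ := hne.csInf_mem hfin
  exact ⟨q, hq, hqw⟩

lemma wdist_triangle [Finite V] (hw : PosWeights G w) (hc : G.Connected) (u x v : V) :
    wdist G w u v ≤ wdist G w u x + wdist G w x v := by
  obtain ⟨p, -, hp⟩ := exists_realizes (w := w) hc u x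
  obtain ⟨q, -, hq⟩ := exists_realizes (w := w) hc x v
  simpa [hp, hq] using wdist_le_walkWeight hw (p.append q)

lemma wdist_pos [Finite V] (hw : PosWeights G w) (hc : G.Connected) {u v : V} (huv : u ≠ v) :
    0 < wdist G w u v := by
  obtain ⟨p, -, hp⟩ := exists_realizes (w := w) hc u v
  cases p with
  | nil => exact absurd rfl huv
  | cons h p =>
    rw [← hp, walkWeight_cons]
    exact add_pos_of_pos_of_nonneg (hw _ h) (walkWeight_nonneg hw p)

lemma add_wdist_le_walkWeight (hw : PosWeights G w) {u v x : V} (p : G.Walk u v)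
    (hx : x ∈ p.support) : wdist G w u x + wdist G w x v ≤ walkWeight G w p := by
  classical
  calc wdist G w u x + wdist G w x v
      ≤ walkWeight G w (p.takeUntil x hx) + walkWeight G w (p.dropUntil x hx) :=
        add_le_add (wdist_le_walkWeight hw _) (wdist_le_walkWeight hw _)
    _ = walkWeight G w p := by rw [← walkWeight_append, p.take_spec hx]

end Wdist

section UsefulEdge

variable {G : SimpleGraph V} {w : Sym2 V → ℝ}

lemma SimpleGraph.Walk.IsTrail.exists_replace_edge {a b i j : V} {P : G.Walk a b}
    (hP : P.IsTrail) (he : s(i, j) ∈ P.edges) (R : G.Walk i j) (hR : s(i, j) ∉ R.edges) :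
    ∃ W : G.Walk a b, s(i, j) ∉ W.edges ∧
      walkWeight G w W + w s(i, j) = walkWeight G w P + walkWeight G w R := by
  induction P with
  | nil => simp at he
  | @cons a c b h P ih =>
    rw [Walk.isTrail_cons] at hP
    rw [Walk.edges_cons, List.mem_cons] at he
    rcases he with he | he
    · rcases Sym2.eq_iff.mp he with ⟨rfl, rfl⟩ | ⟨rfl, rfl⟩
      · refine ⟨R.append P, by simp [hR, hP.2], ?_⟩
        simp only [walkWeight_append, walkWeight_cons]
        ring
      · refine ⟨R.reverse.append P, ?_, ?_⟩
        · rw [he] at hR ⊢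
          simp [hR, hP.2]
        · simp only [walkWeight_append, walkWeight_reverse, walkWeight_cons, Sym2.eq_swap]
          ring
    · obtain ⟨W, hW, hWw⟩ := ih hP.1 he
      refine ⟨Walk.cons h W, ?_, ?_⟩
      · simp only [Walk.edges_cons, List.mem_cons, not_or]
        exact ⟨fun h => hP.2 (h ▸ he), hW⟩
      · simp only [walkWeight_cons]
        linarith

lemma UsefulEdge.lt_walkWeight [Finite V] (hw : PosWeights G w) (hc : G.Connected) {i j : V}
    (hu : UsefulEdge G w s(i, j)) (R : G.Walk i j) (hR : s(i, j) ∉ R.edges) :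
    w s(i, j) < walkWeight G w R := by
  classical
  by_contra! hle
  obtain ⟨a, b, -, hab⟩ := hu
  obtain ⟨P, hP, hPw⟩ := exists_realizes (w := w) hc a b
  obtain ⟨W, hW, hWw⟩ := hP.isTrail.exists_replace_edge (hab P ⟨hP, hPw⟩) R hR
  have hrealizes : Realizes G w W.bypass := by
    refine ⟨W.bypass_isPath, le_antisymm ?_ (wdist_le_walkWeight hw _)⟩
    linarith [walkWeight_bypass_le hw W]
  exact hW (W.edges_bypass_subset_edges (hab _ hrealizes))

lemma UsefulEdge.indec [Finite V] (hw : PosWeights G w) (hc : G.Connected) {i j : V}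
    (hij : G.Adj i j) (hu : UsefulEdge G w s(i, j)) : Indec G w i j := by
  intro z hzi hzj
  by_contra! hle
  obtain ⟨P, -, hP⟩ := exists_realizes (w := w) hc i z
  obtain ⟨Q, -, hQ⟩ := exists_realizes (w := w) hc z j
  have hP_avoids : s(i, j) ∉ P.edges := fun he => by
    have := add_wdist_le_walkWeight hw P (P.snd_mem_support_of_mem_edges he)
    linarith [wdist_pos hw hc hzj, wdist_pos hw hc hzj.symm]
  have hQ_avoids : s(i, j) ∉ Q.edges := fun he => by
    have := add_wdist_le_walkWeight hw Q (Q.fst_mem_support_of_mem_edges he)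
    linarith [wdist_pos hw hc hzi, wdist_pos hw hc hzi.symm]
  have := hu.lt_walkWeight hw hc (P.append Q) (by simp [hP_avoids, hQ_avoids])
  rw [walkWeight_append, hP, hQ] at this
  linarith [wdist_le_weight hw hij]

lemma Indec.usefulEdge (hw : PosWeights G w) {i j : V} (hij : G.Adj i j) (hind : Indec G w i j) :
    UsefulEdge G w s(i, j) := by
  refine ⟨i, j, hij.ne, fun P hP => ?_⟩
  cases P with
  | nil => exact absurd rfl hij.ne
  | @cons _ c _ h P =>
    by_cases hcj : c = j
    · subst hcj
      simp
    · have hPw := hP.2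
      rw [walkWeight_cons] at hPw
      linarith [hind c h.ne' hcj, wdist_le_weight hw h, wdist_le_walkWeight hw P]

lemma usefulEdge_iff_indec [Finite V] (hw : PosWeights G w) (hc : G.Connected) {i j : V}
    (hij : G.Adj i j) : UsefulEdge G w s(i, j) ↔ Indec G w i j :=
  ⟨UsefulEdge.indec hw hc hij, Indec.usefulEdge hw hij⟩

end UsefulEdge

section WdistWeight

variable {G H : SimpleGraph V} {w : Sym2 V → ℝ}

noncomputable def wdistWeight (G : SimpleGraph V) (w : Sym2 V → ℝ) : Sym2 V → ℝ :=
  Sym2.lift ⟨wdist G w, wdist_comm⟩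

@[simp]
lemma wdistWeight_mk (u v : V) : wdistWeight G w s(u, v) = wdist G w u v := rfl

lemma wdistWeight_le (hw : PosWeights G w) {e : Sym2 V} (he : e ∈ G.edgeSet) :
    wdistWeight G w e ≤ w e := by
  induction e using Sym2.ind with
  | h u v => exact wdist_le_weight hw he

lemma posWeights_wdistWeight [Finite V] (hw : PosWeights G w) (hc : G.Connected)
    (H : SimpleGraph V) : PosWeights H (wdistWeight G w) := by
  intro e he
  induction e using Sym2.ind with
  | h u v => exact wdist_pos hw hc (H.ne_of_adj he)

lemma wdist_le_walkWeight_wdistWeight [Finite V] (hw : PosWeights G w) (hc : G.Connected)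
    {u v : V} (p : H.Walk u v) : wdist G w u v ≤ walkWeight H (wdistWeight G w) p := by
  induction p with
  | nil => simp
  | @cons u x v h p ih =>
    rw [walkWeight_cons, wdistWeight_mk]
    linarith [wdist_triangle hw hc u x v]

theorem wdist_wdistWeight_of_le [Finite V] (hw : PosWeights G w) (hc : G.Connected)
    (hGH : G ≤ H) (u v : V) : wdist H (wdistWeight G w) u v = wdist G w u v := by
  obtain ⟨p, hp, hpw⟩ := exists_realizes (w := w) hc u v
  have hmap : walkWeight H (wdistWeight G w) (p.mapLe hGH) = wdist G w u v := by
    refine le_antisymm ?_ (wdist_le_walkWeight_wdistWeight hw hc _)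
    rw [walkWeight_mapLe, ← hpw]
    exact List.sum_le_sum fun e he => wdistWeight_le hw (p.edges_subset_edgeSet he)
  refine IsLeast.csInf_eq ⟨⟨_, hp.mapLe hGH, hmap⟩, ?_⟩
  rintro _ ⟨q, -, rfl⟩
  exact wdist_le_walkWeight_wdistWeight hw hc q

end WdistWeight

section CompleteBipartite

variable {G : SimpleGraph V} {X Y : Set V}

def completeBipartiteOn (X Y : Set V) : SimpleGraph V :=
  SimpleGraph.fromRel fun a b => a ∈ X ∧ b ∈ Y

lemma completeBipartiteOn_adj (hXY : X ∩ Y = ∅) {a b : V} (ha : a ∈ X) (hb : b ∈ Y) :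
    (completeBipartiteOn X Y).Adj a b :=
  ⟨fun h => (hXY.subset ⟨ha, h ▸ hb⟩ : a ∈ (∅ : Set V)), Or.inl ⟨ha, hb⟩⟩

lemma IsBipartiteOn.le_completeBipartiteOn (h : IsBipartiteOn G X Y) :
    G ≤ completeBipartiteOn X Y :=
  fun a b hab => ⟨hab.ne, (h.2.2 a b hab).imp id And.symm⟩

lemma IsBipartiteOn.isBipartiteOn_completeBipartiteOn (h : IsBipartiteOn G X Y) :
    IsBipartiteOn (completeBipartiteOn X Y) X Y :=
  ⟨h.1, h.2.1, fun _ _ hab => hab.2.imp id And.symm⟩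

end CompleteBipartite

lemma indec_iff_findec {n : ℕ} {G : SimpleGraph (Fin n)} {w : Sym2 (Fin n) → ℝ}
    {D : Fin n → Fin n → ℝ} (hD : ∀ i j, i ≠ j → wdist G w i j = D i j) {i j : Fin n}
    (hij : i ≠ j) : Indec G w i j ↔ FIndec D i j := by
  refine forall_congr' fun z => imp_congr_right fun hzi => imp_congr_right fun hzj => ?_
  rw [hD i j hij, hD i z hzi.symm, hD z j hzj]

theorem stmt_14_general {n : ℕ} (D : Fin n → Fin n → ℝ)
    (X Y : Set (Fin n))
    (hbig : ∃ (B : SimpleGraph (Fin n)) (w : Sym2 (Fin n) → ℝ),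
      IsBipartiteOn B X Y ∧ B.Connected ∧ PosWeights B w ∧
      ∀ i j : Fin n, i ≠ j → wdist B w i j = D i j) :
    (∃ (B : SimpleGraph (Fin n)) (w : Sym2 (Fin n) → ℝ),
        IsBipartiteOn B X Y ∧ (∀ i ∈ X, ∀ j ∈ Y, B.Adj i j) ∧ Pruned B w ∧
        B.Connected ∧ PosWeights B w ∧
        ∀ i j : Fin n, i ≠ j → wdist B w i j = D i j) ↔
      ∀ i ∈ X, ∀ j ∈ Y, FIndec D i j := by
  obtain ⟨B₀, w₀, hbip₀, hc₀, hw₀, hD₀⟩ := hbig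
  constructor
  · rintro ⟨B, w, -, hcomplete, hpruned, hc, hw, hD⟩ i hi j hj
    have hij := hcomplete i hi j hj
    exact (indec_iff_findec hD hij.ne).mp ((usefulEdge_iff_indec hw hc hij).mp (hpruned _ hij))
  · intro hindec
    have hle := hbip₀.le_completeBipartiteOn
    have hw := posWeights_wdistWeight hw₀ hc₀ (completeBipartiteOn X Y)
    have hc := hc₀.mono hle
    have hdist := wdist_wdistWeight_of_le hw₀ hc₀ hle
    have hcross :
        ∀ a ∈ X, ∀ b ∈ Y, UsefulEdge (completeBipartiteOn X Y) (wdistWeight B₀ w₀) s(a, b) := by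
      intro a ha b hb
      have hab := completeBipartiteOn_adj hbip₀.1 ha hb
      refine (usefulEdge_iff_indec hw hc hab).mpr ?_
      simpa only [Indec, hdist] using (indec_iff_findec hD₀ hab.ne).mpr (hindec a ha b hb)
    refine ⟨_, _, hbip₀.isBipartiteOn_completeBipartiteOn,
      fun i hi j hj => completeBipartiteOn_adj hbip₀.1 hi hj, fun e he => ?_, hc, hw,
      fun i j hij => (hdist i j).trans (hD₀ i j hij)⟩
    induction e using Sym2.ind with
    | h a b =>
      rcases he.2 with ⟨ha, hb⟩ | ⟨hb, ha⟩
      · exact hcross a ha b hb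
      · exact Sym2.eq_swap ▸ hcross b hb a ha

/-- A family which is bigraphlike on `X`, `Y` is co-bigraphlike on `X` and `Y` iff `D i j`
is indecomposable for all `i ∈ X`, `j ∈ Y`. -/
theorem stmt_14 {n : ℕ} (hn : 2 ≤ n) (D : Fin n → Fin n → ℝ)
    (hsym : ∀ i j, D i j = D j i) (hpos : ∀ i j : Fin n, i ≠ j → 0 < D i j)
    (X Y : Set (Fin n))
    (hbig : ∃ (B : SimpleGraph (Fin n)) (w : Sym2 (Fin n) → ℝ),
      IsBipartiteOn B X Y ∧ B.Connected ∧ PosWeights B w ∧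
      ∀ i j : Fin n, i ≠ j → wdist B w i j = D i j) :
    (∃ (B : SimpleGraph (Fin n)) (w : Sym2 (Fin n) → ℝ),
        IsBipartiteOn B X Y ∧ (∀ i ∈ X, ∀ j ∈ Y, B.Adj i j) ∧ Pruned B w ∧
        B.Connected ∧ PosWeights B w ∧
        ∀ i j : Fin n, i ≠ j → wdist B w i j = D i j) ↔
      ∀ i ∈ X, ∀ j ∈ Y, FIndec D i j :=
  stmt_14_general D X Y hbig
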